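/- arXiv:1307.4795 — 4 statements merged into one kernel-verified Lean document; each statement's English description precedes it below -/
import Mathlib

section
/- Let k be a positive integer and let f ∈ L²(ℝ) be supported in [0,2] with vanishing moments ∫_ℝ x^j f(x) dx = 0 for j = 0, 1, …, k−1. Then for every ω ∈ ℝ, |F f(ω)| ≤ (2^k/(√π · k!)) |ω|^k ‖f‖_{L²(ℝ)}. -/
open MeasureTheory Set

/-- Fourier transform `F f(ω) = (2π)^{-1/2} ∫ e^{-iωx} f(x) dx`. -/
noncomputable def FT (f : ℝ → ℝ) (ω : ℝ) : ℂ :=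
  (((2 * Real.pi) ^ (-(1:ℝ)/2) : ℝ) : ℂ) *
    ∫ x : ℝ, Complex.exp (-(Complex.I * ω * x)) * f x

/-! Expand `e^{-iωx}` by Taylor's formula to order `k`. The Taylor polynomial integrates to zero
against `f` because of the vanishing moments, and on the imaginary axis the remainder is bounded
by `|ωx|^k / k! ≤ (2|ω|)^k / k!` on the support of `f`. Finally Cauchy–Schwarz on `[0, 2]` gives
`‖f‖₁ ≤ √2 ‖f‖₂`, and the `√2` cancels against the normalisation `(2π)^{-1/2}`. -/

open Complex Filter
open scoped Nat

theorem hasDerivAt_cexp_sub_sum_range_succ (n : ℕ) (z : ℂ) :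
    HasDerivAt (fun w => cexp w - ∑ j ∈ Finset.range (n + 1), w ^ j / (j ! : ℂ))
      (cexp z - ∑ j ∈ Finset.range n, z ^ j / (j ! : ℂ)) z := by
  have hterm (j : ℕ) :
      HasDerivAt (fun w : ℂ => w ^ (j + 1) / ((j + 1)! : ℂ)) (z ^ j / (j ! : ℂ)) z := by
    refine ((hasDerivAt_pow (j + 1) z).div_const _).congr_deriv ?_
    rw [Nat.factorial_succ, Nat.cast_mul, Nat.add_sub_cancel, mul_div_mul_left]
    exact_mod_cast j.succ_ne_zero
  simp only [Finset.sum_range_succ', pow_zero, Nat.factorial_zero, Nat.cast_one, div_one]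
  exact (hasDerivAt_exp z).sub ((HasDerivAt.fun_sum fun j _ => hterm j).add_const 1)

theorem norm_cexp_sub_sum_range_le_of_re_nonpos (n : ℕ) {z : ℂ} (hz : z.re ≤ 0) :
    ‖cexp z - ∑ j ∈ Finset.range n, z ^ j / (j ! : ℂ)‖ ≤ ‖z‖ ^ n / n ! := by
  induction n generalizing z with
  | zero => simpa [norm_exp] using hz
  | succ n ih =>
    -- `R_{n+1}(z) = ∫₀¹ R_n(s z) z ds`, and `re (s z) ≤ 0` keeps the induction hypothesis available
    set R : ℂ → ℂ := fun w => cexp w - ∑ j ∈ Finset.range (n + 1), w ^ j / (j ! : ℂ)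
    have hderiv : ∀ s : ℝ, HasDerivAt (fun s : ℝ => R (s * z))
        ((cexp (s * z) - ∑ j ∈ Finset.range n, (s * z) ^ j / (j ! : ℂ)) * z) s := fun s => by
      have hline : HasDerivAt (fun s : ℝ => (s : ℂ) * z) z s := by
        simpa using ((hasDerivAt_id s).ofReal_comp).mul_const z
      exact (hasDerivAt_cexp_sub_sum_range_succ n (s * z)).comp s hline
    have hcont : Continuous fun s : ℝ =>
        (cexp (s * z) - ∑ j ∈ Finset.range n, (s * z) ^ j / (j ! : ℂ)) * z := by fun_prop
    have hR : R z = ∫ s in (0 : ℝ)..1,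
        (cexp (s * z) - ∑ j ∈ Finset.range n, (s * z) ^ j / (j ! : ℂ)) * z := by
      rw [intervalIntegral.integral_eq_sub_of_hasDerivAt (fun s _ => hderiv s)
        (hcont.intervalIntegrable _ _)]
      simp [R, Finset.sum_range_succ']
    calc ‖R z‖ ≤ ∫ s in (0 : ℝ)..1, (s * ‖z‖) ^ n / n ! * ‖z‖ := by
          rw [hR]
          refine intervalIntegral.norm_integral_le_of_norm_le zero_le_one
            (Eventually.of_forall fun s hs => ?_)
            (Continuous.intervalIntegrable (by fun_prop) _ _)
          have hs0 : 0 ≤ s := hs.1.le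
          rw [norm_mul]
          gcongr
          have := ih (z := s * z) (by simpa using mul_nonpos_of_nonneg_of_nonpos hs0 hz)
          rwa [norm_mul, norm_real, Real.norm_of_nonneg hs0] at this
      _ = ‖z‖ ^ (n + 1) / (n + 1)! := by
          simp only [mul_pow, intervalIntegral.integral_div,
            intervalIntegral.integral_mul_const, integral_pow]
          rw [Nat.factorial_succ]
          push_cast
          field_simp
          ring

theorem integral_abs_le_sqrt_measureReal_mul_sqrt_integral_sq {α : Type*} [MeasurableSpace α]
    {μ : Measure α} {f : α → ℝ} {s : Set α} (hs : μ s ≠ ⊤) (hsupp : Function.support f ⊆ s)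
    (hf : MemLp f 2 μ) :
    ∫ x, |f x| ∂μ ≤ √(μ.real s) * √(∫ x, f x ^ 2 ∂μ) := by
  have : IsFiniteMeasure (μ.restrict s) := isFiniteMeasure_restrict.2 hs
  have hzero : ∀ x ∉ s, f x = 0 := fun x hx => Function.notMem_support.1 fun h => hx (hsupp h)
  have holder := integral_mul_norm_le_Lp_mul_Lq Real.HolderConjugate.two_two
    (memLp_const (1 : ℝ)) (by simpa using hf.restrict s)
  simp only [norm_one, one_mul, Real.norm_eq_abs, integral_const, smul_eq_mul, one_pow,
    mul_one, Real.rpow_two, sq_abs, measureReal_restrict_apply_univ, ← Real.sqrt_eq_rpow] at holder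
  rwa [setIntegral_eq_integral_of_forall_compl_eq_zero (by simpa using hzero),
    setIntegral_eq_integral_of_forall_compl_eq_zero (by simpa using hzero)] at holder

theorem MeasureTheory.Integrable.continuous_mul_ofReal_of_support_subset {f : ℝ → ℝ} {K : Set ℝ}
    (hf : Integrable f) (hK : IsCompact K) (hsupp : Function.support f ⊆ K) {g : ℝ → ℂ}
    (hg : Continuous g) : Integrable fun x => g x * f x := by
  rw [← integrableOn_iff_integrable_of_support_subset
    ((Function.support_mul_subset_right _ _).trans (by simpa using hsupp))]
  exact hf.ofReal.integrableOn.continuousOn_mul hg.continuousOn hK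

theorem integral_cexp_mul_eq_integral_remainder_mul_of_moments_eq_zero {k : ℕ} {f : ℝ → ℝ}
    {K : Set ℝ} (hf : Integrable f) (hK : IsCompact K) (hsupp : Function.support f ⊆ K)
    (hmom : ∀ j < k, ∫ x, x ^ j * f x = 0) (c : ℂ) :
    ∫ x : ℝ, cexp (c * x) * f x =
      ∫ x : ℝ, (cexp (c * x) - ∑ j ∈ Finset.range k, (c * x) ^ j / (j ! : ℂ)) * f x := by
  have hint {g : ℝ → ℂ} (hg : Continuous g) : Integrable fun x => g x * f x :=
    hf.continuous_mul_ofReal_of_support_subset hK hsupp hg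
  have hpoly : ∀ j < k, ∫ x : ℝ, (c * x) ^ j / (j ! : ℂ) * f x = 0 := fun j hj => by
    simp_rw [mul_pow, mul_div_right_comm, mul_assoc, ← ofReal_pow, ← ofReal_mul]
    rw [integral_const_mul, integral_complex_ofReal, hmom j hj, ofReal_zero, mul_zero]
  simp_rw [sub_mul, Finset.sum_mul]
  rw [integral_sub (hint (by fun_prop)) (integrable_finsetSum _ fun j _ => hint (by fun_prop)),
    integral_finsetSum _ fun j _ => hint (by fun_prop),
    Finset.sum_eq_zero fun j hj => hpoly j (Finset.mem_range.1 hj), sub_zero]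

theorem norm_integral_cexp_mul_le_of_moments_eq_zero {k : ℕ} {f : ℝ → ℝ} {R : ℝ}
    (hf : Integrable f) (hsupp : Function.support f ⊆ Icc (-R) R)
    (hmom : ∀ j < k, ∫ x, x ^ j * f x = 0) (ω : ℝ) :
    ‖∫ x : ℝ, cexp (-(I * ω * x)) * f x‖ ≤ (R * |ω|) ^ k / k ! * ∫ x, |f x| := by
  have hrem := integral_cexp_mul_eq_integral_remainder_mul_of_moments_eq_zero hf isCompact_Icc
    hsupp hmom (-(I * ω))
  simp_rw [neg_mul] at hrem
  rw [hrem, ← integral_const_mul]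
  refine norm_integral_le_of_norm_le (hf.abs.const_mul _) (ae_of_all _ fun x => ?_)
  by_cases hx : f x = 0
  · simp [hx]
  have hxR : |x| ≤ R := abs_le.2 (hsupp hx)
  rw [norm_mul, norm_real, Real.norm_eq_abs]
  gcongr
  refine (norm_cexp_sub_sum_range_le_of_re_nonpos k (by simp)).trans ?_
  gcongr
  simp only [norm_neg, norm_mul, norm_I, norm_real, Real.norm_eq_abs, one_mul]
  nlinarith [abs_nonneg ω, abs_nonneg x]

theorem stmt6_general (k : ℕ) (f : ℝ → ℝ)
    (hf : MemLp f 2 volume)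
    (hsupp : Function.support f ⊆ Icc (0:ℝ) 2)
    (hmom : ∀ j < k, ∫ x : ℝ, x ^ j * f x = 0) :
    ∀ ω : ℝ, ‖FT f ω‖ ≤
      2 ^ k / (Real.sqrt Real.pi * (Nat.factorial k : ℝ)) * |ω| ^ k *
        Real.sqrt (∫ x : ℝ, f x ^ 2) := by
  intro ω
  have hvol : volume (Icc (0 : ℝ) 2) ≠ ⊤ := measure_Icc_lt_top.ne
  have hfi : Integrable f := memLp_one_iff_integrable.1 <|
    hf.mono_exponent_of_measure_support_ne_top
      (fun x hx => Function.notMem_support.1 (mt (@hsupp x) hx)) hvol (by norm_num)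
  have hL1 := integral_abs_le_sqrt_measureReal_mul_sqrt_integral_sq hvol hsupp hf
  have hmoment := norm_integral_cexp_mul_le_of_moments_eq_zero hfi
    (hsupp.trans (Icc_subset_Icc (by norm_num) le_rfl)) hmom ω
  rw [Real.volume_real_Icc_of_le zero_le_two, sub_zero] at hL1
  have hcoef : (2 * Real.pi) ^ (-(1 : ℝ) / 2) = (√2 * √Real.pi)⁻¹ := by
    rw [neg_div, Real.rpow_neg (by positivity), ← Real.sqrt_eq_rpow, Real.sqrt_mul zero_le_two]
  rw [FT, norm_mul, norm_real, Real.norm_of_nonneg (by positivity), hcoef]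
  calc (√2 * √Real.pi)⁻¹ * ‖∫ x : ℝ, cexp (-(I * ω * x)) * f x‖
      ≤ (√2 * √Real.pi)⁻¹ * ((2 * |ω|) ^ k / k ! * (√2 * √(∫ x, f x ^ 2))) := by
        gcongr
        exact hmoment.trans (by gcongr)
    _ = _ := by
        field_simp
        ring

/-- Let `k ≥ 1` and let `f ∈ L²(ℝ)` be supported in `[0,2]` with vanishing
moments `∫ x^j f(x) dx = 0` for `j = 0, …, k-1`. Then for every `ω`,
`|F f(ω)| ≤ (2^k/(√π · k!)) |ω|^k ‖f‖_{L²(ℝ)}`. -/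
theorem stmt6 (k : ℕ) (hk : 0 < k) (f : ℝ → ℝ)
    (hf : MemLp f 2 volume)
    (hsupp : Function.support f ⊆ Icc (0:ℝ) 2)
    (hmom : ∀ j < k, ∫ x : ℝ, x ^ j * f x = 0) :
    ∀ ω : ℝ, ‖FT f ω‖ ≤
      2 ^ k / (Real.sqrt Real.pi * (Nat.factorial k : ℝ)) * |ω| ^ k *
        Real.sqrt (∫ x : ℝ, f x ^ 2) :=
  stmt6_general k f hf hsupp hmom
end

section
/- Let α ∈ (1,2) and f ∈ L²(0,1), and define u(x) = −(I₀^α f)(x) + (I₀^α f)(1) · x^{α−1} for x ∈ (0,1]. Then u extends continuously to [0,1] with u(0) = u(1) = 0, the function I₀^{2−α} u is twice differentiable almost everywhere on (0,1), and −(d²/dx²)(I₀^{2−α} u)(x) = f(x) for almost every x ∈ (0,1); that is, u is a strong solution of the Riemann–Liouville boundary value problem −(d²/dx²)(I₀^{2−α} u) = f with zero Dirichlet boundary conditions. -/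
open MeasureTheory Set

/-- Left Riemann–Liouville fractional integral of order `γ` on `(0,1)`. -/
noncomputable def I0 (γ : ℝ) (f : ℝ → ℝ) (x : ℝ) : ℝ :=
  (1 / Real.Gamma γ) * ∫ t in Ioo (0:ℝ) x, (x - t) ^ (γ - 1) * f t

/-!
By the semigroup law `I₀^β I₀^α = I₀^{α+β}` (Fubini plus the Beta integral) and
`I₀^β s^{α-1} = Γ(α)/Γ(α+β) · x^{α+β-1}`, the function `I₀^{2-α} u` equals
`C Γ(α) x - I₀² f(x)` on `(0,1)`, where `C = (I₀^α f)(1)`, and `I₀² f = I₀¹ I₀¹ f` is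
the iterated primitive of `f`. Its second derivative is therefore `-f` almost everywhere,
by the Lebesgue differentiation theorem. Continuity of `u` up to the boundary follows by
dominated convergence, writing `I₀^α f` with the kernel `max (x - t) 0 ^ (α - 1)`, which
is continuous for `α > 1`.
-/

open Filter Topology

theorem intervalIntegral_rpow_mul_sub_rpow {p q b : ℝ} (hp : 0 < p) (hq : 0 < q) (hb : 0 < b) :
    ∫ s in 0..b, s ^ (p - 1) * (b - s) ^ (q - 1) =
      Real.Gamma p * Real.Gamma q / Real.Gamma (p + q) * b ^ (p + q - 1) := by
  apply Complex.ofReal_injective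
  have h := Complex.betaIntegral_scaled p q hb
  rw [Complex.betaIntegral_eq_Gamma_mul_div p q (by simpa) (by simpa)] at h
  rw [← intervalIntegral.integral_ofReal, mul_comm]
  push_cast
  rw [← Complex.Gamma_ofReal, ← Complex.Gamma_ofReal, ← Complex.Gamma_ofReal,
    Complex.ofReal_cpow hb.le]
  push_cast
  rw [← h]
  refine intervalIntegral.integral_congr fun s hs => ?_
  rw [uIcc_of_le hb.le] at hs
  rw [Complex.ofReal_cpow hs.1, Complex.ofReal_cpow (sub_nonneg.2 hs.2)]
  push_cast
  rfl

theorem intervalIntegral_sub_rpow_mul_sub_rpow {p q a b : ℝ} (hp : 0 < p) (hq : 0 < q)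
    (hab : a < b) :
    ∫ s in a..b, (s - a) ^ (p - 1) * (b - s) ^ (q - 1) =
      Real.Gamma p * Real.Gamma q / Real.Gamma (p + q) * (b - a) ^ (p + q - 1) := by
  rw [← intervalIntegral_rpow_mul_sub_rpow hp hq (sub_pos.2 hab), ← sub_self a,
    ← intervalIntegral.integral_comp_sub_right]
  simp only [sub_sub_sub_cancel_right]

theorem integrableOn_sub_rpow {γ : ℝ} (hγ : 0 < γ) (x : ℝ) :
    IntegrableOn (fun s => (x - s) ^ (γ - 1)) (Ioo 0 x) := by
  rcases le_or_gt x 0 with hx | hx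
  · simp [Ioo_eq_empty_of_le hx]
  rw [← intervalIntegrable_iff_integrableOn_Ioo_of_le hx.le]
  have hpow : IntervalIntegrable (fun s : ℝ => s ^ (γ - 1)) volume 0 x :=
    intervalIntegral.intervalIntegrable_rpow' (by linarith)
  simpa using (hpow.comp_sub_left x).symm

theorem integrableOn_sub_rpow_mul_rpow {α β : ℝ} (hα : 1 ≤ α) (hβ : 0 < β) (x : ℝ) :
    IntegrableOn (fun s => (x - s) ^ (β - 1) * s ^ (α - 1)) (Ioo 0 x) :=
  (integrableOn_sub_rpow hβ x).mul_continuousOn_of_subset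
    (Real.continuous_rpow_const (by linarith)).continuousOn measurableSet_Ioo isCompact_Icc
    Ioo_subset_Icc_self

theorem I0_add {γ x : ℝ} {f g : ℝ → ℝ}
    (hf : IntegrableOn (fun s => (x - s) ^ (γ - 1) * f s) (Ioo 0 x))
    (hg : IntegrableOn (fun s => (x - s) ^ (γ - 1) * g s) (Ioo 0 x)) :
    I0 γ (fun s => f s + g s) x = I0 γ f x + I0 γ g x := by
  simp only [I0, mul_add, integral_add hf hg]

theorem I0_neg (γ : ℝ) (f : ℝ → ℝ) (x : ℝ) : I0 γ (fun s => -f s) x = -I0 γ f x := by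
  simp only [I0, mul_neg, integral_neg]

theorem I0_const_mul (γ c : ℝ) (f : ℝ → ℝ) (x : ℝ) :
    I0 γ (fun s => c * f s) x = c * I0 γ f x := by
  simp only [I0, mul_left_comm _ c, integral_const_mul]

theorem I0_one (f : ℝ → ℝ) {x : ℝ} (hx : 0 ≤ x) : I0 1 f x = ∫ t in 0..x, f t := by
  simp [I0, intervalIntegral.integral_of_le hx, integral_Ioc_eq_integral_Ioo]

theorem I0_rpow {α β x : ℝ} (hα : 0 < α) (hβ : 0 < β) (hx : 0 < x) :
    I0 β (fun s => s ^ (α - 1)) x =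
      Real.Gamma α / Real.Gamma (α + β) * x ^ (α + β - 1) := by
  have hB := intervalIntegral_sub_rpow_mul_sub_rpow hα hβ hx
  simp only [sub_zero] at hB
  rw [I0, ← integral_Ioc_eq_integral_Ioo, ← intervalIntegral.integral_of_le hx.le]
  simp_rw [mul_comm ((x - _) ^ (β - 1)), hB]
  have := (Real.Gamma_pos_of_pos hβ).ne'
  field_simp

theorem I0_eq_integral_max {α : ℝ} (hα : 1 < α) (f : ℝ → ℝ) {x a : ℝ} (hxa : x ≤ a) :
    I0 α f x = 1 / Real.Gamma α * ∫ t in Ioo 0 a, max (x - t) 0 ^ (α - 1) * f t := by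
  have hmax : EqOn (fun t => max (x - t) 0 ^ (α - 1) * f t)
      ((Ioo 0 x).indicator fun t => (x - t) ^ (α - 1) * f t) (Ioo 0 a) := by
    intro t ht
    dsimp only
    by_cases htx : t < x
    · rw [indicator_of_mem (show t ∈ Ioo 0 x from ⟨ht.1, htx⟩), max_eq_left (by linarith)]
    · rw [indicator_of_notMem fun h => htx h.2, max_eq_right (by linarith),
        Real.zero_rpow (by linarith), zero_mul]
  rw [I0, setIntegral_congr_fun measurableSet_Ioo hmax, setIntegral_indicator measurableSet_Ioo,
    Ioo_inter_Ioo, max_self, min_eq_right hxa]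

theorem continuousOn_I0 {α a : ℝ} (hα : 1 < α) {f : ℝ → ℝ}
    (hf : IntegrableOn f (Ioo 0 a)) :
    ContinuousOn (I0 α f) (Iic a) := by
  refine ContinuousOn.congr (f := fun x => 1 / Real.Gamma α *
    ∫ t in Ioo 0 a, max (x - t) 0 ^ (α - 1) * f t) ?_ fun x hx => I0_eq_integral_max hα f hx
  refine continuousOn_const.mul (continuousOn_of_dominated
    (bound := fun t => a ^ (α - 1) * ‖f t‖) (fun x _ => ?_) (fun x hx => ?_)
    (hf.norm.const_mul _) (ae_of_all _ fun t => ?_))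
  · have hkernel : Measurable fun t => max (x - t) 0 ^ (α - 1) := by fun_prop
    exact hkernel.aestronglyMeasurable.mul hf.1
  · filter_upwards [ae_restrict_mem measurableSet_Ioo] with t ht
    rw [norm_mul, Real.norm_of_nonneg (by positivity)]
    gcongr
    exact max_le (by linarith [ht.1, mem_Iic.1 hx]) (ht.1.trans ht.2).le
  · exact ((Real.continuous_rpow_const (by linarith)).comp (by fun_prop)).mul continuous_const
      |>.continuousOn

section Composition

variable {α β x : ℝ} {g : ℝ → ℝ}

/-- The integrand of `Γ(α) Γ(β) · I0 β (I0 α g) x` over `(s, t) ∈ (0, x)²`. -/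
noncomputable def rlCompKernel (α β x : ℝ) (g : ℝ → ℝ) : ℝ × ℝ → ℝ :=
  {p | p.2 < p.1}.indicator fun p => (x - p.1) ^ (β - 1) * ((p.1 - p.2) ^ (α - 1) * g p.2)

theorem rlCompKernel_apply (s t : ℝ) :
    rlCompKernel α β x g (s, t) =
      if t < s then (x - s) ^ (β - 1) * ((s - t) ^ (α - 1) * g t) else 0 :=
  indicator_apply _ _ _

theorem integrable_rlCompKernel (hα : 1 ≤ α) (hβ : 0 < β) (hg : IntegrableOn g (Ioo 0 x)) :
    Integrable (rlCompKernel α β x g)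
      ((volume.restrict (Ioo 0 x)).prod (volume.restrict (Ioo 0 x))) := by
  have hdom : Integrable (fun p : ℝ × ℝ => x ^ (α - 1) * ‖(x - p.1) ^ (β - 1) * g p.2‖)
      ((volume.restrict (Ioo 0 x)).prod (volume.restrict (Ioo 0 x))) :=
    ((integrableOn_sub_rpow hβ x).mul_prod hg).norm.const_mul _
  refine hdom.mono' ?_ ?_
  · refine AEStronglyMeasurable.indicator ?_ (measurableSet_lt measurable_snd measurable_fst)
    have hx : Measurable fun p : ℝ × ℝ => (x - p.1) ^ (β - 1) := by fun_prop
    have hst : Measurable fun p : ℝ × ℝ => (p.1 - p.2) ^ (α - 1) := by fun_prop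
    exact hx.aestronglyMeasurable.mul (hst.aestronglyMeasurable.mul hg.1.comp_snd)
  rw [Measure.prod_restrict]
  filter_upwards [ae_restrict_mem (measurableSet_Ioo.prod measurableSet_Ioo)]
    with ⟨s, t⟩ ⟨⟨hs0, hsx⟩, ⟨ht0, htx⟩⟩
  by_cases hts : t < s
  · have hkernel : (s - t) ^ (α - 1) ≤ x ^ (α - 1) :=
      Real.rpow_le_rpow (by linarith) (by linarith) (by linarith)
    rw [rlCompKernel_apply, if_pos hts, norm_mul, norm_mul, norm_mul, mul_left_comm]
    gcongr
    rw [Real.norm_of_nonneg (by positivity)]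
    exact hkernel
  · rw [rlCompKernel_apply, if_neg hts, norm_zero]
    exact mul_nonneg (Real.rpow_nonneg (by linarith) _) (norm_nonneg _)

theorem integral_rlCompKernel_right {s : ℝ} (hsx : s ≤ x) :
    ∫ t in Ioo 0 x, rlCompKernel α β x g (s, t) =
      (x - s) ^ (β - 1) * ∫ t in Ioo 0 s, (s - t) ^ (α - 1) * g t := by
  have hK : (fun t => rlCompKernel α β x g (s, t)) =
      (Iio s).indicator fun t => (x - s) ^ (β - 1) * ((s - t) ^ (α - 1) * g t) := by
    ext t
    simp only [rlCompKernel_apply, indicator_apply, mem_Iio]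
  rw [hK, setIntegral_indicator measurableSet_Iio, Ioo_inter_Iio, min_eq_right hsx,
    integral_const_mul]

theorem integral_rlCompKernel_left (hα : 0 < α) (hβ : 0 < β) {t : ℝ} (ht : t ∈ Ioo 0 x) :
    ∫ s in Ioo 0 x, rlCompKernel α β x g (s, t) =
      Real.Gamma α * Real.Gamma β / Real.Gamma (α + β) * ((x - t) ^ (α + β - 1) * g t) := by
  have hK : (fun s => rlCompKernel α β x g (s, t)) =
      fun s => (Ioi t).indicator (fun s => (s - t) ^ (α - 1) * (x - s) ^ (β - 1)) s * g t := by
    ext s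
    simp only [rlCompKernel_apply, indicator_apply, mem_Ioi]
    split_ifs <;> ring
  rw [hK, integral_mul_const, setIntegral_indicator measurableSet_Ioi, Ioo_inter_Ioi,
    max_eq_right ht.1.le, ← integral_Ioc_eq_integral_Ioo,
    ← intervalIntegral.integral_of_le ht.2.le,
    intervalIntegral_sub_rpow_mul_sub_rpow hα hβ ht.2, mul_assoc]

theorem integrableOn_sub_rpow_mul_I0 (hα : 1 ≤ α) (hβ : 0 < β)
    (hg : IntegrableOn g (Ioo 0 x)) :
    IntegrableOn (fun s => (x - s) ^ (β - 1) * I0 α g s) (Ioo 0 x) := by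
  refine ((integrable_rlCompKernel hα hβ hg).integral_prod_left.const_mul
    (1 / Real.Gamma α)).congr ?_
  filter_upwards [ae_restrict_mem measurableSet_Ioo] with s hs
  rw [integral_rlCompKernel_right hs.2.le, I0]
  ring

theorem I0_I0 (hα : 1 ≤ α) (hβ : 0 < β) (hg : IntegrableOn g (Ioo 0 x)) :
    I0 β (I0 α g) x = I0 (α + β) g x := by
  have hΓα := (Real.Gamma_pos_of_pos (by linarith : 0 < α)).ne'
  have hΓβ := (Real.Gamma_pos_of_pos hβ).ne'
  have hleft : ∫ s in Ioo 0 x, ∫ t in Ioo 0 x, rlCompKernel α β x g (s, t) =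
      Real.Gamma α * ∫ s in Ioo 0 x, (x - s) ^ (β - 1) * I0 α g s := by
    rw [← integral_const_mul]
    refine setIntegral_congr_fun measurableSet_Ioo fun s hs => ?_
    rw [integral_rlCompKernel_right hs.2.le, I0]
    field_simp
  have hright : ∫ t in Ioo 0 x, ∫ s in Ioo 0 x, rlCompKernel α β x g (s, t) =
      Real.Gamma α * Real.Gamma β / Real.Gamma (α + β) *
        ∫ t in Ioo 0 x, (x - t) ^ (α + β - 1) * g t := by
    rw [← integral_const_mul]
    exact setIntegral_congr_fun measurableSet_Ioo fun t ht =>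
      integral_rlCompKernel_left (by linarith) hβ ht
  have hFubini := integral_integral_swap (f := fun s t => rlCompKernel α β x g (s, t))
    (integrable_rlCompKernel hα hβ hg)
  rw [hleft, hright] at hFubini
  have hΓαβ := (Real.Gamma_pos_of_pos (by linarith : 0 < α + β)).ne'
  rw [I0, I0.eq_def (α + β)]
  field_simp at hFubini ⊢
  linear_combination hFubini

end Composition

theorem I0_two {f : ℝ → ℝ} {x : ℝ} (hf : IntegrableOn f (Ioo 0 x)) (hx : 0 ≤ x) :
    I0 2 f x = ∫ s in 0..x, ∫ t in 0..s, f t := by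
  rw [show (2 : ℝ) = 1 + 1 by norm_num, ← I0_I0 le_rfl one_pos hf, I0_one _ hx]
  refine intervalIntegral.integral_congr fun s hs => I0_one f ?_
  exact (uIcc_of_le hx ▸ hs).1

theorem I0_two_sub_solution {α C x : ℝ} (hα : α ∈ Ioo 1 2) {f : ℝ → ℝ}
    (hf : IntegrableOn f (Ioo 0 x)) (hx : 0 < x) :
    I0 (2 - α) (fun s => -I0 α f s + C * s ^ (α - 1)) x =
      C * Real.Gamma α * x - ∫ s in 0..x, ∫ t in 0..s, f t := by
  obtain ⟨hα1, hα2⟩ := hα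
  have hβ : 0 < 2 - α := by linarith
  have hI0 : IntegrableOn (fun s => (x - s) ^ (2 - α - 1) * -I0 α f s) (Ioo 0 x) := by
    simpa only [mul_neg, Pi.neg_def] using (integrableOn_sub_rpow_mul_I0 hα1.le hβ hf).neg
  have hpow : IntegrableOn (fun s => (x - s) ^ (2 - α - 1) * (C * s ^ (α - 1))) (Ioo 0 x) := by
    simp only [mul_left_comm _ C]
    exact (integrableOn_sub_rpow_mul_rpow hα1.le hβ x).const_mul C
  rw [I0_add hI0 hpow,
    I0_neg, I0_const_mul, I0_I0 hα1.le hβ hf, I0_rpow (by linarith) hβ hx, add_sub_cancel,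
    Real.Gamma_two, I0_two hf hx.le]
  norm_num
  ring

theorem ae_hasDerivAt_deriv_of_eqOn {φ f : ℝ → ℝ} {a b c : ℝ}
    (hf : IntegrableOn f (Ioo a b))
    (hφ : EqOn φ (fun y => c * y - ∫ s in a..y, ∫ t in a..s, f t) (Ioo a b)) :
    ∀ᵐ x ∂(volume.restrict (Ioo a b)),
      HasDerivAt φ (c - ∫ t in a..x, f t) x ∧ HasDerivAt (deriv φ) (-f x) x := by
  rcases le_or_gt b a with hba | hab
  · simp [Ioo_eq_empty_of_le hba]
  have hfab : IntervalIntegrable f volume a b :=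
    (intervalIntegrable_iff_integrableOn_Ioo_of_le hab.le).2 hf
  have hF : ContinuousOn (fun s => ∫ t in a..s, f t) (Icc a b) := by
    simpa [uIcc_of_le hab.le] using
      intervalIntegral.continuousOn_primitive_interval' hfab left_mem_uIcc
  have hφ' : ∀ y ∈ Ioo a b, HasDerivAt φ (c - ∫ t in a..y, f t) y := by
    intro y hy
    have hprim : HasDerivAt (fun z => ∫ s in a..z, ∫ t in a..s, f t) (∫ t in a..y, f t) y :=
      intervalIntegral.integral_hasDerivAt_right
        ((hF.mono (Icc_subset_Icc_right hy.2.le)).intervalIntegrable_of_Icc hy.1.le)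
        ((hF.mono Ioo_subset_Icc_self).stronglyMeasurableAtFilter isOpen_Ioo y hy)
        (hF.continuousAt (Icc_mem_nhds hy.1 hy.2))
    have hlin := (hasDerivAt_id y).const_mul c
    rw [mul_one] at hlin
    exact (hlin.sub hprim).congr_of_eventuallyEq
      (eventually_of_mem (isOpen_Ioo.mem_nhds hy) hφ)
  have hderiv : ∀ x ∈ Ioo a b, deriv φ =ᶠ[𝓝 x] fun y => c - ∫ t in a..y, f t :=
    fun x hx => eventually_of_mem (isOpen_Ioo.mem_nhds hx) fun y hy => (hφ' y hy).deriv
  filter_upwards [ae_restrict_mem measurableSet_Ioo,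
    ae_restrict_of_ae hfab.ae_hasDerivAt_integral] with x hx hFx
  have hFx' := hFx (Ioo_subset_Icc_self.trans Icc_subset_uIcc hx) a left_mem_uIcc
  exact ⟨hφ' x hx, (hFx'.const_sub c).congr_of_eventuallyEq (hderiv x hx)⟩

/-- For `α ∈ (1,2)`, `f ∈ L²(0,1)` and
`u(x) = -(I₀^α f)(x) + (I₀^α f)(1)·x^{α-1}`: `u` is continuous on `[0,1]` with
`u(0) = u(1) = 0`, `I₀^{2-α} u` is twice differentiable a.e. on `(0,1)`, and
`-(d²/dx²)(I₀^{2-α} u) = f` a.e. on `(0,1)`. -/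
theorem stmt10 (α : ℝ) (hα : α ∈ Ioo (1:ℝ) 2) (f : ℝ → ℝ)
    (hf : MemLp f 2 (volume.restrict (Ioo (0:ℝ) 1)))
    (u : ℝ → ℝ)
    (hu : ∀ x, u x = -(I0 α f x) + I0 α f 1 * x ^ (α - 1)) :
    ContinuousOn u (Icc (0:ℝ) 1) ∧ u 0 = 0 ∧ u 1 = 0 ∧
    (∀ᵐ x ∂(volume.restrict (Ioo (0:ℝ) 1)),
      DifferentiableAt ℝ (I0 (2 - α) u) x ∧
      DifferentiableAt ℝ (deriv (I0 (2 - α) u)) x ∧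
      -(deriv (deriv (I0 (2 - α) u)) x) = f x) := by
  obtain rfl : u = fun x => -(I0 α f x) + I0 α f 1 * x ^ (α - 1) := funext hu
  have hf1 : IntegrableOn f (Ioo 0 1) := hf.integrable one_le_two
  refine ⟨?_, by simp [I0, Real.zero_rpow (by linarith [hα.1] : α - 1 ≠ 0)], by simp, ?_⟩
  · exact ((continuousOn_I0 hα.1 hf1).mono Icc_subset_Iic_self).neg.add
      (continuousOn_const.mul (Real.continuous_rpow_const (by linarith [hα.1])).continuousOn)
  have hsol : EqOn (I0 (2 - α) fun x => -(I0 α f x) + I0 α f 1 * x ^ (α - 1))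
      (fun y => I0 α f 1 * Real.Gamma α * y - ∫ s in 0..y, ∫ t in 0..s, f t) (Ioo 0 1) :=
    fun y hy => I0_two_sub_solution hα (hf1.mono_set (Ioo_subset_Ioo_right hy.2.le)) hy.1
  filter_upwards [ae_hasDerivAt_deriv_of_eqOn hf1 hsol] with x ⟨hd1, hd2⟩
  exact ⟨hd1.differentiableAt, hd2.differentiableAt, by rw [hd2.deriv, neg_neg]⟩
end

section
/- Let α ∈ (1,2) and let u ∈ C¹([0,1]) with u(0) = u(1) = 0. Then ∫₀¹ (I₀^{1−α/2} u′)(x) · (1−x)^{α/2−1} dx = 0. (This expresses the orthogonality A(u, (1−x)^{α−1}) = 0 of the singular function (1−x)^{α−1} to the range of the bilinear form A.) -/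
/-!
Write `g = u'` and `γ = 1 - α/2`, so that `(1 - x)^(α/2 - 1) = (1 - x)^(-γ)`. Exchanging the order
of integration over the triangle `0 < t < x < 1`, the left-hand side becomes
`Γ(γ)⁻¹ ∫₀¹ g(t) (∫ₜ¹ (1 - x)^(-γ) (x - t)^(γ - 1) dx) dt`. The substitution `x = t + (1 - t) s`
shows that the inner integral is the Beta integral `B(γ, 1 - γ)` for every `t`, because the
exponents `-γ` and `γ - 1` add up to `-1`. Hence the whole expression is a multiple of
`∫₀¹ u' = u(1) - u(0) = 0`. Fubini applies because `u'` is bounded and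
`∫₀ˣ (x - t)^(γ - 1) dt = x^γ / γ ≤ 1 / γ`, while `(1 - x)^(-γ)` is integrable as `γ < 1`.
-/

open MeasureTheory Set Function

theorem integral_Ioo_integral_Ioo_swap {a b : ℝ} {f : ℝ → ℝ → ℝ}
    (hf : Integrable (uncurry fun x t => (Iio x).indicator (f x) t)
      ((volume.restrict (Ioo a b)).prod (volume.restrict (Ioo a b)))) :
    ∫ x in Ioo a b, ∫ t in Ioo a x, f x t = ∫ t in Ioo a b, ∫ x in Ioo t b, f x t := by
  calc ∫ x in Ioo a b, ∫ t in Ioo a x, f x t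
      = ∫ x in Ioo a b, ∫ t in Ioo a b, (Iio x).indicator (f x) t :=
        setIntegral_congr_fun measurableSet_Ioo fun x hx => by
          rw [setIntegral_indicator measurableSet_Iio, Ioo_inter_Iio, min_eq_right hx.2.le]
    _ = ∫ t in Ioo a b, ∫ x in Ioo a b, (Iio x).indicator (f x) t := integral_integral_swap hf
    _ = ∫ t in Ioo a b, ∫ x in Ioo t b, f x t :=
        setIntegral_congr_fun measurableSet_Ioo fun t ht => by
          have hslice : (fun x => (Iio x).indicator (f x) t) = (Ioi t).indicator (f · t) := by
            ext x
            simp only [indicator_apply, mem_Iio, mem_Ioi]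
          rw [hslice, setIntegral_indicator measurableSet_Ioi, Ioo_inter_Ioi, max_eq_right ht.1.le]

section RiemannLiouvilleKernel

variable {γ : ℝ}

theorem integrableOn_Ioo_sub_rpow (hγ : 0 < γ) {x : ℝ} (hx : 0 ≤ x) :
    IntegrableOn (fun t => (x - t) ^ (γ - 1)) (Ioo 0 x) := by
  rw [← intervalIntegrable_iff_integrableOn_Ioo_of_le hx]
  have h := intervalIntegral.intervalIntegrable_rpow' (a := 0) (b := x) (r := γ - 1) (by linarith)
  simpa using (h.comp_sub_left x).symm

theorem integral_Ioo_sub_rpow (hγ : 0 < γ) {x : ℝ} (hx : 0 ≤ x) :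
    ∫ t in Ioo 0 x, (x - t) ^ (γ - 1) = x ^ γ / γ := by
  rw [← integral_Ioc_eq_integral_Ioo, ← intervalIntegral.integral_of_le hx,
    intervalIntegral.integral_comp_sub_left (fun s => s ^ (γ - 1)) x, sub_self, sub_zero,
    integral_rpow (Or.inl (by linarith)), Real.zero_rpow (by linarith), sub_add_cancel, sub_zero]

theorem integral_Ioo_one_sub_rpow_neg_mul_sub_rpow {t : ℝ} (ht : t < 1) :
    ∫ x in Ioo t 1, (1 - x) ^ (-γ) * (x - t) ^ (γ - 1)
      = ∫ s in Ioo 0 1, (1 - s) ^ (-γ) * s ^ (γ - 1) := by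
  have h1t : 0 < 1 - t := by linarith
  have hsubst : EqOn (fun s => (1 - ((1 - t) * s + t)) ^ (-γ) * ((1 - t) * s + t - t) ^ (γ - 1))
      (fun s => (1 - t)⁻¹ * ((1 - s) ^ (-γ) * s ^ (γ - 1))) (uIcc 0 1) := by
    intro s hs
    rw [uIcc_of_le zero_le_one] at hs
    dsimp only
    rw [show 1 - ((1 - t) * s + t) = (1 - t) * (1 - s) by ring, add_sub_cancel_right,
      Real.mul_rpow h1t.le (by linarith [hs.2]), Real.mul_rpow h1t.le hs.1,
      ← Real.rpow_neg_one, mul_mul_mul_comm, ← Real.rpow_add h1t, show -γ + (γ - 1) = -1 by ring]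
  have h := intervalIntegral.integral_comp_mul_add
    (fun x => (1 - x) ^ (-γ) * (x - t) ^ (γ - 1)) h1t.ne' t (a := 0) (b := 1)
  rw [intervalIntegral.integral_congr hsubst, intervalIntegral.integral_const_mul, mul_zero,
    zero_add, mul_one, sub_add_cancel, smul_eq_mul, mul_right_inj' (inv_ne_zero h1t.ne')] at h
  rw [← integral_Ioc_eq_integral_Ioo, ← integral_Ioc_eq_integral_Ioo,
    ← intervalIntegral.integral_of_le ht.le, ← intervalIntegral.integral_of_le zero_le_one, h]

theorem integral_Ioo_indicator_Iio_rpow_kernel (hγ : 0 < γ) {x : ℝ} (hx : x ∈ Ioo (0:ℝ) 1) :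
    ∫ t in Ioo 0 1, (Iio x).indicator (fun t => (1 - x) ^ (-γ) * (x - t) ^ (γ - 1)) t
      = (1 - x) ^ (-γ) * (x ^ γ / γ) := by
  rw [setIntegral_indicator measurableSet_Iio, Ioo_inter_Iio, min_eq_right hx.2.le,
    integral_const_mul, integral_Ioo_sub_rpow hγ hx.1.le]

theorem integrable_indicator_Iio_rpow_kernel (hγ0 : 0 < γ) (hγ1 : γ < 1) :
    Integrable (uncurry fun x t : ℝ =>
        (Iio x).indicator (fun t => (1 - x) ^ (-γ) * (x - t) ^ (γ - 1)) t)
      ((volume.restrict (Ioo (0:ℝ) 1)).prod (volume.restrict (Ioo 0 1))) := by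
  have hmeas : Measurable (uncurry fun x t : ℝ =>
      (Iio x).indicator (fun t => (1 - x) ^ (-γ) * (x - t) ^ (γ - 1)) t) :=
    Measurable.ite (measurableSet_lt measurable_snd measurable_fst) (by fun_prop) measurable_const
  have hdominant : IntegrableOn (fun x : ℝ => (1 - x) ^ (-γ) * γ⁻¹) (Ioo 0 1) := by
    have h := integrableOn_Ioo_sub_rpow (x := 1) (by linarith : 0 < 1 - γ) zero_le_one
    rw [sub_sub_cancel_left] at h
    exact h.mul_const γ⁻¹
  rw [integrable_prod_iff hmeas.aestronglyMeasurable]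
  constructor
  · filter_upwards [ae_restrict_mem measurableSet_Ioo] with x hx
    refine (integrableOn_indicator_iff measurableSet_Iio).2 ?_
    rw [Iio_inter_Ioo, min_eq_left hx.2.le]
    exact (integrableOn_Ioo_sub_rpow hγ0 hx.1.le).const_mul ((1 - x) ^ (-γ))
  refine hdominant.mono' hmeas.aestronglyMeasurable.norm.integral_prod_right' ?_
  filter_upwards [ae_restrict_mem measurableSet_Ioo] with x hx
  have h1x : 0 ≤ (1 - x) ^ (-γ) := Real.rpow_nonneg (by linarith [hx.2]) _
  have hnonneg : ∀ t, 0 ≤ (Iio x).indicator (fun t => (1 - x) ^ (-γ) * (x - t) ^ (γ - 1)) t :=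
    indicator_nonneg fun t ht => mul_nonneg h1x (Real.rpow_nonneg (by linarith [mem_Iio.1 ht]) _)
  have hxγ : x ^ γ ≤ 1 := Real.rpow_le_one hx.1.le hx.2.le hγ0.le
  simp only [uncurry_apply_pair, Real.norm_of_nonneg (hnonneg _),
    integral_Ioo_indicator_Iio_rpow_kernel hγ0 hx]
  rw [Real.norm_of_nonneg (mul_nonneg h1x (div_nonneg (Real.rpow_nonneg hx.1.le _) hγ0.le)),
    ← one_div]
  gcongr

theorem integrable_indicator_Iio_rpow_kernel_mul {g : ℝ → ℝ} {M : ℝ} (hγ0 : 0 < γ) (hγ1 : γ < 1)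
    (hg : Measurable g) (hgM : ∀ t ∈ Ioo (0:ℝ) 1, |g t| ≤ M) :
    Integrable (uncurry fun x t : ℝ =>
        (Iio x).indicator (fun t => (1 - x) ^ (-γ) * (x - t) ^ (γ - 1) * g t) t)
      ((volume.restrict (Ioo (0:ℝ) 1)).prod (volume.restrict (Ioo 0 1))) := by
  refine ((integrable_indicator_Iio_rpow_kernel hγ0 hγ1).const_mul M).mono ?_ ?_
  · exact (Measurable.ite (measurableSet_lt measurable_snd measurable_fst) (by fun_prop)
      measurable_const).aestronglyMeasurable
  rw [Measure.prod_restrict]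
  filter_upwards [ae_restrict_mem (measurableSet_Ioo.prod measurableSet_Ioo)] with ⟨x, t⟩ hxt
  simp only [uncurry_apply_pair]
  rw [indicator_mul_left, norm_mul, norm_mul, mul_comm, Real.norm_eq_abs, Real.norm_eq_abs M]
  exact mul_le_mul_of_nonneg_right ((hgM t hxt.2).trans (le_abs_self M)) (norm_nonneg _)

theorem integral_I0_mul_one_sub_rpow_neg {g : ℝ → ℝ} {M : ℝ} (hγ0 : 0 < γ) (hγ1 : γ < 1)
    (hg : Measurable g) (hgM : ∀ t ∈ Ioo (0:ℝ) 1, |g t| ≤ M) :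
    ∫ x in Ioo 0 1, I0 γ g x * (1 - x) ^ (-γ)
      = (∫ s in Ioo 0 1, (1 - s) ^ (-γ) * s ^ (γ - 1)) / Real.Gamma γ * ∫ t in Ioo 0 1, g t := by
  simp only [I0, mul_assoc, integral_const_mul]
  rw [one_div_mul_eq_div, div_mul_eq_mul_div]
  congr 1
  calc ∫ x in Ioo 0 1, (∫ t in Ioo 0 x, (x - t) ^ (γ - 1) * g t) * (1 - x) ^ (-γ)
      = ∫ x in Ioo 0 1, ∫ t in Ioo 0 x, (1 - x) ^ (-γ) * (x - t) ^ (γ - 1) * g t := by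
        congr 1 with x
        rw [← integral_mul_const]
        congr 1 with t
        ring
    _ = ∫ t in Ioo 0 1, ∫ x in Ioo t 1, (1 - x) ^ (-γ) * (x - t) ^ (γ - 1) * g t :=
        integral_Ioo_integral_Ioo_swap (integrable_indicator_Iio_rpow_kernel_mul hγ0 hγ1 hg hgM)
    _ = ∫ t in Ioo 0 1, (∫ s in Ioo 0 1, (1 - s) ^ (-γ) * s ^ (γ - 1)) * g t :=
        setIntegral_congr_fun measurableSet_Ioo fun t ht => by
          rw [integral_mul_const, integral_Ioo_one_sub_rpow_neg_mul_sub_rpow ht.2]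
    _ = (∫ s in Ioo 0 1, (1 - s) ^ (-γ) * s ^ (γ - 1)) * ∫ t in Ioo 0 1, g t :=
        integral_const_mul _ _

end RiemannLiouvilleKernel

theorem ContDiffOn.exists_bound_deriv_Ioo {u : ℝ → ℝ} {a b : ℝ} (hu : ContDiffOn ℝ 1 u (Icc a b))
    (hab : a < b) : ∃ M, ∀ t ∈ Ioo a b, |deriv u t| ≤ M := by
  obtain ⟨M, hM⟩ := isCompact_Icc.exists_bound_of_continuousOn
    (hu.continuousOn_derivWithin (uniqueDiffOn_Icc hab) le_rfl)
  refine ⟨M, fun t ht => ?_⟩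
  rw [← derivWithin_of_mem_nhds (Icc_mem_nhds ht.1 ht.2), ← Real.norm_eq_abs]
  exact hM t (Ioo_subset_Icc_self ht)

/-- For `α ∈ (1,2)` and `u ∈ C¹([0,1])` with `u(0) = u(1) = 0`,
`∫₀¹ (I₀^{1-α/2} u')(x) (1-x)^{α/2-1} dx = 0`, expressing the orthogonality
`A(u, (1-x)^{α-1}) = 0`. -/
theorem stmt16 (α : ℝ) (hα : α ∈ Ioo (1:ℝ) 2) (u : ℝ → ℝ)
    (hu : ContDiffOn ℝ 1 u (Icc (0:ℝ) 1)) (h0 : u 0 = 0) (h1 : u 1 = 0) :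
    ∫ x in Ioo (0:ℝ) 1, I0 (1 - α/2) (deriv u) x * (1 - x) ^ (α/2 - 1) = 0 := by
  obtain ⟨M, hM⟩ := hu.exists_bound_deriv_Ioo zero_lt_one
  have hftc : ∫ t in Ioo 0 1, deriv u t = 0 := by
    rw [← integral_Ioc_eq_integral_Ioo, ← intervalIntegral.integral_of_le zero_le_one,
      intervalIntegral.integral_deriv_of_contDiffOn_Icc hu zero_le_one, h0, h1, sub_zero]
  rw [show α/2 - 1 = -(1 - α/2) by ring, integral_I0_mul_one_sub_rpow_neg
    (by linarith [hα.2]) (by linarith [hα.1]) (measurable_deriv u) hM, hftc, mul_zero]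
end

section
/- Let α ∈ (1,2), let m ≥ 2 be an integer, set h = 1/m and nodes x_i = ih for i = 0, …, m, let φ₀(x) = (1−x)^{α−1}, and let Π_h φ₀ be the piecewise linear interpolant of φ₀ on this uniform mesh, i.e., (Π_h φ₀)(x) = φ₀(x_i) + (φ₀(x_{i+1}) − φ₀(x_i))(x − x_i)/h for x ∈ [x_i, x_{i+1}]. Then there is a constant c = c(α) > 0, independent of m, such that 0 ≤ ∫₀¹ x^{1−α} (φ₀(x) − (Π_h φ₀)(x)) dx ≤ c h^{α}. -/
/-!
Since `φ₀'' = -(α-1)(2-α)(1-x)^{α-3} ≤ 0`, `φ₀` is concave on `(-∞, 1]` and lies above its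
interpolant. On a mesh cell `[a, b]` with `b < 1`, the bound `φ₀'' ≥ -(1-b)^{α-3}` makes the
interpolation error at most `h² (1-b)^{α-3} ≤ 2^{3-α} h² (1-x)^{α-3}`; on the last cell it is at
most `φ₀` itself. Splitting `(0, 1)` at `1 - h`, the first bound integrates against `x^{1-α}` to
`O(h² + h² ∫_h^1 u^{α-3} du) = O(h^α)`, the second to `O(∫_0^h u^{α-1} du) = O(h^α)`.
-/

open MeasureTheory Set

/-- The singular function `φ₀(x) = (1-x)^{α-1}`. -/
noncomputable def phi0 (α : ℝ) (x : ℝ) : ℝ := (1 - x) ^ (α - 1)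

/-- The piecewise linear interpolant of `f` on the uniform mesh `xᵢ = i/m`, `i = 0, …, m`,
of mesh size `h = 1/m`: on `[xᵢ, xᵢ₊₁]` it equals
`f(xᵢ) + (f(xᵢ₊₁) - f(xᵢ))(x - xᵢ)/h`. -/
noncomputable def interp (m : ℕ) (f : ℝ → ℝ) (x : ℝ) : ℝ :=
  f ((⌊x * m⌋ : ℝ) / m)
    + (f (((⌊x * m⌋ : ℝ) + 1) / m) - f ((⌊x * m⌋ : ℝ) / m))
      * (x - (⌊x * m⌋ : ℝ) / m) * m

noncomputable def linInterp (f : ℝ → ℝ) (a b x : ℝ) : ℝ :=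
  f a + (f b - f a) * ((x - a) / (b - a))

section LinInterp

variable {f f' f'' : ℝ → ℝ} {a b x K : ℝ}

lemma linInterp_nonneg (hab : a < b) (ha : 0 ≤ f a) (hb : 0 ≤ f b) (hx : x ∈ Icc a b) :
    0 ≤ linInterp f a b x := by
  have ht₀ : 0 ≤ (x - a) / (b - a) := div_nonneg (by linarith [hx.1]) (by linarith)
  have ht₁ : (x - a) / (b - a) ≤ 1 := (div_le_one (by linarith)).2 (by linarith [hx.2])
  have : linInterp f a b x = (1 - (x - a) / (b - a)) * f a + (x - a) / (b - a) * f b := by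
    unfold linInterp; ring
  rw [this]
  have := sub_nonneg.2 ht₁
  positivity

lemma sub_linInterp_le (hab : a < b) (hf : ContinuousOn f (Icc a b))
    (hf' : ∀ t ∈ Ioo a b, HasDerivAt f (f' t) t)
    (hf'' : ∀ t ∈ Ioo a b, HasDerivAt f' (f'' t) t)
    (hK : ∀ t ∈ Ioo a b, -K ≤ f'' t) (hx : x ∈ Icc a b) :
    f x - linInterp f a b x ≤ K / 2 * ((x - a) * (b - x)) := by
  set s := (f b - f a) / (b - a)
  -- `g'' = f'' + K ≥ 0`, so `g` is convex; it vanishes at `a` and `b`.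
  set g : ℝ → ℝ := fun t ↦ f t - linInterp f a b t - K / 2 * ((t - a) * (b - t))
  have hg : ConvexOn ℝ (Icc a b) g := by
    refine convexOn_of_hasDerivWithinAt2_nonneg (convex_Icc a b)
      (f' := fun t ↦ f' t - s - K / 2 * (a + b - 2 * t)) (f'' := fun t ↦ f'' t + K) ?_ ?_ ?_ ?_
    · unfold g linInterp; fun_prop
    all_goals rw [interior_Icc]; intro t ht
    · have hL : HasDerivAt (linInterp f a b) s t := by
        unfold linInterp
        simpa [s, div_eq_mul_inv, mul_comm] using
          (((hasDerivAt_id t).sub_const a).div_const (b - a)).const_mul (f b - f a)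
            |>.const_add (f a)
      have hq : HasDerivAt (fun t ↦ (t - a) * (b - t)) (a + b - 2 * t) t :=
        (((hasDerivAt_id' t).sub_const a).mul ((hasDerivAt_id' t).const_sub b)).congr_deriv
          (by ring)
      exact (((hf' t ht).sub hL).sub (hq.const_mul (K / 2))).hasDerivWithinAt
    · exact (((hf'' t ht).sub_const s).sub
        ((((hasDerivAt_id' t).const_mul 2).const_sub (a + b)).const_mul (K / 2))).hasDerivWithinAt
        |>.congr_deriv (by ring)
    · linarith [hK t ht]
  have hga : g a = 0 := by simp [g, linInterp]
  have hgb : g b = 0 := by simp [g, linInterp, (sub_pos.2 hab).ne']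
  have := hg.le_on_segment (left_mem_Icc.2 hab.le) (right_mem_Icc.2 hab.le)
    (by rwa [segment_eq_Icc hab.le])
  simp only [g, hga, hgb, max_self] at this
  linarith

lemma linInterp_le (hab : a < b) (hf : ContinuousOn f (Icc a b))
    (hf' : ∀ t ∈ Ioo a b, HasDerivAt f (f' t) t)
    (hf'' : ∀ t ∈ Ioo a b, HasDerivAt f' (f'' t) t)
    (hconc : ∀ t ∈ Ioo a b, f'' t ≤ 0) (hx : x ∈ Icc a b) :
    linInterp f a b x ≤ f x := by
  have := sub_linInterp_le (f := fun t ↦ -f t) (f'' := fun t ↦ -f'' t) (K := 0) hab hf.neg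
    (fun t ht ↦ (hf' t ht).neg) (fun t ht ↦ (hf'' t ht).neg)
    (fun t ht ↦ by linarith [hconc t ht]) hx
  simp only [linInterp] at this ⊢
  linarith

end LinInterp

noncomputable def meshNode (m : ℕ) (k : ℤ) : ℝ := k / m

section Mesh
variable {m : ℕ} {f : ℝ → ℝ} {x : ℝ}

lemma interp_eq_linInterp (hm : m ≠ 0) :
    interp m f x = linInterp f (meshNode m ⌊x * m⌋) (meshNode m (⌊x * m⌋ + 1)) x := by
  have : (m : ℝ) ≠ 0 := by exact_mod_cast hm
  simp only [interp, linInterp, meshNode]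
  push_cast
  field_simp
  ring

lemma meshNode_add_one_sub (m : ℕ) (k : ℤ) : meshNode m (k + 1) - meshNode m k = 1 / m := by
  simp only [meshNode]; push_cast; ring

lemma mem_Ico_meshNode_floor (hm : 0 < m) :
    x ∈ Ico (meshNode m ⌊x * m⌋) (meshNode m (⌊x * m⌋ + 1)) := by
  have hm' : (0 : ℝ) < m := by exact_mod_cast hm
  refine ⟨(div_le_iff₀ hm').2 (Int.floor_le _), ?_⟩
  rw [meshNode, lt_div_iff₀ hm']
  push_cast
  exact Int.lt_floor_add_one _

lemma meshNode_floor_add_one_le (hm : 0 < m) {n : ℤ} (hx : x < meshNode m n) :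
    meshNode m (⌊x * m⌋ + 1) ≤ meshNode m n := by
  have hm' : (0 : ℝ) < m := by exact_mod_cast hm
  rw [meshNode, lt_div_iff₀ hm'] at hx
  have : ⌊x * m⌋ + 1 ≤ n := Int.floor_lt.2 hx
  exact div_le_div_of_nonneg_right (by exact_mod_cast this) hm'.le

lemma meshNode_self (hm : m ≠ 0) : meshNode m m = 1 := by
  simp [meshNode, hm]

lemma meshNode_self_sub_one (hm : m ≠ 0) : meshNode m (m - 1) = 1 - 1 / m := by
  have : (m : ℝ) ≠ 0 := by exact_mod_cast hm
  simp only [meshNode]; push_cast; field_simp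

lemma meshNode_floor_add_one_le_one (hm : 0 < m) (hx : x < 1) :
    meshNode m (⌊x * m⌋ + 1) ≤ 1 := by
  simpa only [meshNode_self hm.ne'] using
    meshNode_floor_add_one_le hm (n := m) (by rwa [meshNode_self hm.ne'])

lemma meshNode_floor_add_one_le_one_sub (hm : 0 < m) (hx : x < 1 - 1 / m) :
    meshNode m (⌊x * m⌋ + 1) ≤ 1 - 1 / m := by
  simpa only [meshNode_self_sub_one hm.ne'] using
    meshNode_floor_add_one_le hm (n := m - 1) (by rwa [meshNode_self_sub_one hm.ne'])

end Mesh

section Rpow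
variable {x s t c h : ℝ}

lemma hasDerivAt_one_sub_rpow {p : ℝ} (hx : x < 1) :
    HasDerivAt (fun y : ℝ ↦ (1 - y) ^ p) (-p * (1 - x) ^ (p - 1)) x := by
  convert ((hasDerivAt_id' x).const_sub 1).rpow_const (p := p) (Or.inl (by linarith)) using 1
  ring

lemma rpow_le_two_rpow_neg (hx : 1 / 2 ≤ x) (hs : s ≤ 0) : x ^ s ≤ 2 ^ (-s) := by
  calc x ^ s ≤ (1 / 2) ^ s := Real.rpow_le_rpow_of_nonpos (by norm_num) hx hs
    _ = 2 ^ (-s) := by rw [one_div, Real.inv_rpow zero_le_two, Real.rpow_neg zero_le_two]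

lemma rpow_mul_one_sub_rpow_le (hx : x ∈ Ioo 0 1) (hs : s ≤ 0) (ht : t ≤ 0) :
    x ^ s * (1 - x) ^ t ≤ 2 ^ (-t) * x ^ s + 2 ^ (-s) * (1 - x) ^ t := by
  have h₁ : 0 ≤ x ^ s := Real.rpow_nonneg hx.1.le s
  have h₂ : 0 ≤ (1 - x) ^ t := Real.rpow_nonneg (by linarith [hx.2]) t
  have h₃ : (0 : ℝ) ≤ 2 ^ (-s) := by positivity
  have h₄ : (0 : ℝ) ≤ 2 ^ (-t) := by positivity
  rcases le_total x (1 / 2) with hx2 | hx2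
  · have := rpow_le_two_rpow_neg (x := 1 - x) (by linarith) ht
    nlinarith
  · have := rpow_le_two_rpow_neg hx2 hs
    nlinarith

lemma integral_Ioo_zero_rpow_le (hc₀ : 0 ≤ c) (hc₁ : c ≤ 1) (hs : -1 < s) :
    ∫ x in Ioo 0 c, x ^ s ≤ 1 / (s + 1) := by
  rw [← integral_Ioc_eq_integral_Ioo, ← intervalIntegral.integral_of_le hc₀,
    integral_rpow (Or.inl hs), Real.zero_rpow (by linarith), sub_zero]
  have : 0 < s + 1 := by linarith
  gcongr
  exact Real.rpow_le_one hc₀ hc₁ this.le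

lemma integrableOn_Ioo_zero_rpow (hs : -1 < s) :
    IntegrableOn (fun x : ℝ ↦ x ^ s) (Ioo 0 c) :=
  ((intervalIntegral.intervalIntegrable_rpow' hs).1.mono_set Ioo_subset_Ioc_self :)

lemma integral_Ioo_zero_one_sub_rpow_le (hh₀ : 0 < h) (hh₁ : h ≤ 1) (ht : t < -1) :
    ∫ x in Ioo 0 (1 - h), (1 - x) ^ t ≤ h ^ (t + 1) / (-(t + 1)) := by
  rw [← integral_Ioc_eq_integral_Ioo, ← intervalIntegral.integral_of_le (by linarith),
    intervalIntegral.integral_comp_sub_left (fun x ↦ x ^ t), sub_sub_cancel, sub_zero,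
    integral_rpow (Or.inr ⟨ht.ne, notMem_uIcc_of_lt hh₀ one_pos⟩), Real.one_rpow,
    ← neg_div_neg_eq, neg_sub]
  exact div_le_div_of_nonneg_right (by linarith) (by linarith)

lemma integrableOn_Ioo_zero_one_sub_rpow (hh₀ : 0 < h) :
    IntegrableOn (fun x : ℝ ↦ (1 - x) ^ t) (Ioo 0 (1 - h)) :=
  (ContinuousOn.integrableOn_Icc (ContinuousOn.rpow_const (by fun_prop)
    fun x hx ↦ Or.inl (by linarith [hx.2]))).mono_set Ioo_subset_Icc_self

lemma integral_Ico_one_sub_rpow (hh₀ : 0 ≤ h) (ht : -1 < t) :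
    ∫ x in Ico (1 - h) 1, (1 - x) ^ t = h ^ (t + 1) / (t + 1) := by
  rw [integral_Ico_eq_integral_Ioo, ← integral_Ioc_eq_integral_Ioo,
    ← intervalIntegral.integral_of_le (by linarith),
    intervalIntegral.integral_comp_sub_left (fun x ↦ x ^ t), sub_sub_cancel, sub_self,
    integral_rpow (Or.inl ht), Real.zero_rpow (by linarith), sub_zero]

lemma integrableOn_Ico_one_sub_rpow (hh₀ : 0 ≤ h) (ht : -1 < t) :
    IntegrableOn (fun x : ℝ ↦ (1 - x) ^ t) (Ico (1 - h) 1) := by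
  have := (intervalIntegral.intervalIntegrable_rpow' ht (a := h) (b := 0)).comp_sub_left 1
  rw [sub_zero, intervalIntegrable_iff_integrableOn_Ico_of_le (by linarith)] at this
  exact this

end Rpow

section Phi0

variable {α a b x : ℝ} {m : ℕ}

lemma continuous_phi0 (hα : 1 ≤ α) : Continuous (phi0 α) :=
  (Real.continuous_rpow_const (by linarith)).comp (continuous_const.sub continuous_id)

lemma phi0_nonneg (hx : x ≤ 1) : 0 ≤ phi0 α x :=
  Real.rpow_nonneg (by linarith) _

lemma hasDerivAt_phi0 (hx : x < 1) :
    HasDerivAt (phi0 α) (-(α - 1) * (1 - x) ^ (α - 2)) x := by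
  have h := hasDerivAt_one_sub_rpow (p := α - 1) hx
  rwa [show α - 1 - 1 = α - 2 by ring] at h

lemma hasDerivAt_deriv_phi0 (hx : x < 1) :
    HasDerivAt (fun y ↦ -(α - 1) * (1 - y) ^ (α - 2))
      (-((α - 1) * (2 - α)) * (1 - x) ^ (α - 3)) x := by
  have h := (hasDerivAt_one_sub_rpow (p := α - 2) hx).const_mul (-(α - 1))
  rw [show α - 2 - 1 = α - 3 by ring] at h
  exact h.congr_deriv (by ring)

lemma linInterp_phi0_le (hα : α ∈ Icc 1 2) (hab : a < b) (hb : b ≤ 1) (hx : x ∈ Icc a b) :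
    linInterp (phi0 α) a b x ≤ phi0 α x :=
  linInterp_le hab (continuous_phi0 hα.1).continuousOn
    (fun t ht ↦ hasDerivAt_phi0 (by linarith [ht.2]))
    (fun t ht ↦ hasDerivAt_deriv_phi0 (by linarith [ht.2]))
    (fun t ht ↦ by
      have : 0 ≤ (α - 1) * (2 - α) := mul_nonneg (by linarith [hα.1]) (by linarith [hα.2])
      have := Real.rpow_nonneg (by linarith [ht.2] : (0:ℝ) ≤ 1 - t) (α - 3)
      nlinarith)
    hx

lemma phi0_sub_linInterp_le (hα : α ∈ Icc 1 2) (hab : a < b) (hb : b < 1) (hx : x ∈ Icc a b) :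
    phi0 α x - linInterp (phi0 α) a b x ≤ (b - a) ^ 2 * (1 - b) ^ (α - 3) := by
  have hc₀ : 0 ≤ (α - 1) * (2 - α) := mul_nonneg (by linarith [hα.1]) (by linarith [hα.2])
  have hc₁ : (α - 1) * (2 - α) ≤ 1 := by nlinarith [hα.1, hα.2]
  have hpow : 0 ≤ (1 - b) ^ (α - 3) := Real.rpow_nonneg (by linarith) _
  have herr := sub_linInterp_le (K := (α - 1) * (2 - α) * (1 - b) ^ (α - 3)) hab
    (continuous_phi0 hα.1).continuousOn
    (fun t ht ↦ hasDerivAt_phi0 (by linarith [ht.2]))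
    (fun t ht ↦ hasDerivAt_deriv_phi0 (by linarith [ht.2]))
    (fun t ht ↦ by
      have : (1 - t) ^ (α - 3) ≤ (1 - b) ^ (α - 3) :=
        Real.rpow_le_rpow_of_nonpos (by linarith) (by linarith [ht.2]) (by linarith [hα.2])
      nlinarith) hx
  have hxa : 0 ≤ x - a := by linarith [hx.1]
  have hbx : 0 ≤ b - x := by linarith [hx.2]
  have hprod : (x - a) * (b - x) ≤ (b - a) ^ 2 := by nlinarith
  calc _ ≤ (α - 1) * (2 - α) * (1 - b) ^ (α - 3) / 2 * ((x - a) * (b - x)) := herr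
    _ ≤ 1 * (1 - b) ^ (α - 3) / 2 * (b - a) ^ 2 := by gcongr
    _ ≤ (b - a) ^ 2 * (1 - b) ^ (α - 3) := by nlinarith [sq_nonneg (b - a)]

lemma interp_phi0_le (hα : α ∈ Icc 1 2) (hm : 0 < m) (hx : x < 1) :
    interp m (phi0 α) x ≤ phi0 α x := by
  have hcell := mem_Ico_meshNode_floor (x := x) hm
  rw [interp_eq_linInterp hm.ne']
  exact linInterp_phi0_le hα (hcell.1.trans_lt hcell.2) (meshNode_floor_add_one_le_one hm hx)
    (Ico_subset_Icc_self hcell)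

lemma interp_phi0_nonneg (hm : 0 < m) (hx : x < 1) : 0 ≤ interp m (phi0 α) x := by
  have hcell := mem_Ico_meshNode_floor (x := x) hm
  rw [interp_eq_linInterp hm.ne']
  exact linInterp_nonneg (hcell.1.trans_lt hcell.2) (phi0_nonneg (by linarith [hcell.1]))
    (phi0_nonneg (meshNode_floor_add_one_le_one hm hx)) (Ico_subset_Icc_self hcell)

lemma phi0_sub_interp_le (hα : α ∈ Icc 1 2) (hm : 0 < m) (hx : x < 1 - 1 / m) :
    phi0 α x - interp m (phi0 α) x ≤ 2 ^ (3 - α) * (1 / m) ^ 2 * (1 - x) ^ (α - 3) := by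
  have hcell := mem_Ico_meshNode_floor (x := x) hm
  have hb := meshNode_floor_add_one_le_one_sub hm hx
  have hba := meshNode_add_one_sub m ⌊x * m⌋
  set a := meshNode m ⌊x * m⌋
  set b := meshNode m (⌊x * m⌋ + 1)
  have hh : (0 : ℝ) < 1 / m := by positivity
  have hxb : (1 - x) / 2 ≤ 1 - b := by linarith [hcell.1]
  have hb1 : b < 1 := by linarith
  rw [interp_eq_linInterp hm.ne']
  calc _ ≤ (b - a) ^ 2 * (1 - b) ^ (α - 3) :=
        phi0_sub_linInterp_le hα (hcell.1.trans_lt hcell.2) hb1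
          (Ico_subset_Icc_self hcell)
    _ ≤ (1 / m) ^ 2 * ((1 - x) / 2) ^ (α - 3) := by
        rw [hba]
        exact mul_le_mul_of_nonneg_left
          (Real.rpow_le_rpow_of_nonpos (by linarith) hxb (by linarith [hα.2])) (by positivity)
    _ = 2 ^ (3 - α) * (1 / m) ^ 2 * (1 - x) ^ (α - 3) := by
        rw [Real.div_rpow (by linarith) zero_le_two, show 3 - α = -(α - 3) by ring,
          Real.rpow_neg zero_le_two]
        ring

end Phi0

lemma MeasureTheory.IntegrableOn.of_nonneg_of_le {F g : ℝ → ℝ} {s : Set ℝ} (hs : MeasurableSet s)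
    (hF : Measurable F) (hF₀ : ∀ x ∈ s, 0 ≤ F x) (hFg : ∀ x ∈ s, F x ≤ g x)
    (hg : IntegrableOn g s) : IntegrableOn F s :=
  hg.mono' hF.aestronglyMeasurable <| (ae_restrict_iff' hs).2 <| ae_of_all _ fun x hx ↦ by
    rw [Real.norm_of_nonneg (hF₀ x hx)]; exact hFg x hx

noncomputable def weightedError (α : ℝ) (m : ℕ) (x : ℝ) : ℝ :=
  x ^ (1 - α) * (phi0 α x - interp m (phi0 α) x)

section WeightedError
variable {α x : ℝ} {m : ℕ}

lemma measurable_weightedError (hα : 1 ≤ α) : Measurable (weightedError α m) := by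
  have := (continuous_phi0 hα).measurable
  unfold weightedError interp
  fun_prop

lemma weightedError_nonneg (hα : α ∈ Icc 1 2) (hm : 0 < m) (hx : x ∈ Ioo 0 1) :
    0 ≤ weightedError α m x :=
  mul_nonneg (Real.rpow_nonneg hx.1.le _) (sub_nonneg.2 (interp_phi0_le hα hm hx.2))

lemma weightedError_le_of_lt (hα : α ∈ Icc 1 2) (hm : 0 < m) (hx : x ∈ Ioo 0 (1 - 1 / (m : ℝ))) :
    weightedError α m x ≤ 2 ^ (3 - α) * (1 / m) ^ 2 *
      (2 ^ (3 - α) * x ^ (1 - α) + 2 ^ (α - 1) * (1 - x) ^ (α - 3)) := by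
  have hx' : x ∈ Ioo 0 1 := ⟨hx.1, hx.2.trans_le (by simp)⟩
  have hweight := rpow_mul_one_sub_rpow_le hx' (s := 1 - α) (t := α - 3)
    (by linarith [hα.1]) (by linarith [hα.2])
  rw [neg_sub, neg_sub] at hweight
  calc weightedError α m x
      ≤ x ^ (1 - α) * (2 ^ (3 - α) * (1 / m) ^ 2 * (1 - x) ^ (α - 3)) :=
        mul_le_mul_of_nonneg_left (phi0_sub_interp_le hα hm hx.2) (Real.rpow_nonneg hx.1.le _)
    _ = 2 ^ (3 - α) * (1 / m) ^ 2 * (x ^ (1 - α) * (1 - x) ^ (α - 3)) := by ring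
    _ ≤ _ := mul_le_mul_of_nonneg_left hweight (by positivity)

lemma weightedError_le_of_ge (hα : α ∈ Icc 1 2) (hm : 0 < m) (hx₀ : 1 / 2 ≤ x) (hx₁ : x < 1) :
    weightedError α m x ≤ 2 ^ (α - 1) * (1 - x) ^ (α - 1) :=
  mul_le_mul (by simpa using rpow_le_two_rpow_neg hx₀ (s := 1 - α) (by linarith [hα.1]))
    (sub_le_self _ (interp_phi0_nonneg hm hx₁)) (sub_nonneg.2 (interp_phi0_le hα hm hx₁))
    (by positivity)

end WeightedError

section Integrals
variable {α : ℝ} {m : ℕ}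

lemma integrableOn_weightedError_Ioo_majorant (hα : α < 2) (hm : 0 < m) :
    IntegrableOn (fun x : ℝ ↦ 2 ^ (3 - α) * (1 / m) ^ 2 *
      (2 ^ (3 - α) * x ^ (1 - α) + 2 ^ (α - 1) * (1 - x) ^ (α - 3))) (Ioo 0 (1 - 1 / (m : ℝ))) :=
  (((integrableOn_Ioo_zero_rpow (s := 1 - α) (by linarith)).const_mul _).add
    ((integrableOn_Ioo_zero_one_sub_rpow (by positivity)).const_mul _)).const_mul _

lemma integrableOn_weightedError_Ioo (hα : α ∈ Ioo 1 2) (hm : 0 < m) :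
    IntegrableOn (weightedError α m) (Ioo 0 (1 - 1 / (m : ℝ))) :=
  .of_nonneg_of_le measurableSet_Ioo (measurable_weightedError hα.1.le)
    (fun x hx ↦ weightedError_nonneg (Ioo_subset_Icc_self hα) hm
      ⟨hx.1, hx.2.trans_le (by simp)⟩)
    (fun x hx ↦ weightedError_le_of_lt (Ioo_subset_Icc_self hα) hm hx)
    (integrableOn_weightedError_Ioo_majorant hα.2 hm)

lemma setIntegral_weightedError_Ioo_le (hα : α ∈ Ioo 1 2) (hm : 0 < m) :
    ∫ x in Ioo 0 (1 - 1 / (m : ℝ)), weightedError α m x ≤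
      2 ^ (3 - α) * (2 ^ (3 - α) + 2 ^ (α - 1)) / (2 - α) * (1 / m) ^ α := by
  obtain ⟨hα₁, hα₂⟩ := hα
  set h : ℝ := 1 / m
  have hh₀ : 0 < h := by positivity
  have hh₁ : h ≤ 1 := div_le_one_of_le₀ (by exact_mod_cast hm) (Nat.cast_nonneg m)
  have hI₁ := integral_Ioo_zero_rpow_le (s := 1 - α) (sub_nonneg.2 hh₁) (by linarith) (by linarith)
  have hI₂ := integral_Ioo_zero_one_sub_rpow_le (t := α - 3) hh₀ hh₁ (by linarith)
  rw [show 1 - α + 1 = 2 - α by ring] at hI₁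
  rw [show α - 3 + 1 = α - 2 by ring, show -(α - 2) = 2 - α by ring] at hI₂
  have hpow : h ^ 2 ≤ h ^ α := by
    simpa using Real.rpow_le_rpow_of_exponent_ge hh₀ hh₁ hα₂.le
  have hpow' : h ^ 2 * h ^ (α - 2) = h ^ α := by
    rw [← Real.rpow_natCast, ← Real.rpow_add hh₀]; norm_num
  calc ∫ x in Ioo 0 (1 - h), weightedError α m x
      ≤ ∫ x in Ioo 0 (1 - h), 2 ^ (3 - α) * h ^ 2 *
          (2 ^ (3 - α) * x ^ (1 - α) + 2 ^ (α - 1) * (1 - x) ^ (α - 3)) :=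
        setIntegral_mono_on (integrableOn_weightedError_Ioo ⟨hα₁, hα₂⟩ hm)
          (integrableOn_weightedError_Ioo_majorant hα₂ hm) measurableSet_Ioo
          fun x hx ↦ weightedError_le_of_lt ⟨hα₁.le, hα₂.le⟩ hm hx
    _ = 2 ^ (3 - α) * h ^ 2 * (2 ^ (3 - α) * (∫ x in Ioo 0 (1 - h), x ^ (1 - α))
          + 2 ^ (α - 1) * ∫ x in Ioo 0 (1 - h), (1 - x) ^ (α - 3)) := by
        rw [integral_const_mul, integral_add
          ((integrableOn_Ioo_zero_rpow (s := 1 - α) (by linarith)).const_mul _)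
          ((integrableOn_Ioo_zero_one_sub_rpow hh₀).const_mul _),
          integral_const_mul, integral_const_mul]
    _ ≤ 2 ^ (3 - α) * h ^ 2 * (2 ^ (3 - α) * (1 / (2 - α))
          + 2 ^ (α - 1) * (h ^ (α - 2) / (2 - α))) := by
        gcongr
    _ = 2 ^ (3 - α) / (2 - α) * (2 ^ (3 - α) * h ^ 2 + 2 ^ (α - 1) * (h ^ 2 * h ^ (α - 2))) := by
        ring
    _ ≤ 2 ^ (3 - α) * (2 ^ (3 - α) + 2 ^ (α - 1)) / (2 - α) * h ^ α := by
        rw [hpow']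
        calc _ ≤ 2 ^ (3 - α) / (2 - α) * (2 ^ (3 - α) * h ^ α + 2 ^ (α - 1) * h ^ α) :=
              mul_le_mul_of_nonneg_left (by gcongr) (div_nonneg (by positivity) (by linarith))
          _ = _ := by ring

lemma integrableOn_weightedError_Ico (hα : α ∈ Icc 1 2) (hm : 2 ≤ m) :
    IntegrableOn (weightedError α m) (Ico (1 - 1 / (m : ℝ)) 1) := by
  have hh : (1 : ℝ) / m ≤ 1 / 2 := by gcongr; exact_mod_cast hm
  exact .of_nonneg_of_le measurableSet_Ico (measurable_weightedError hα.1)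
    (fun x hx ↦ weightedError_nonneg hα (by omega) ⟨by linarith [hx.1], hx.2⟩)
    (fun x hx ↦ weightedError_le_of_ge hα (by omega) (by linarith [hx.1]) hx.2)
    ((integrableOn_Ico_one_sub_rpow (by positivity) (by linarith [hα.1])).const_mul _)

lemma setIntegral_weightedError_Ico_le (hα : α ∈ Icc 1 2) (hm : 2 ≤ m) :
    ∫ x in Ico (1 - 1 / (m : ℝ)) 1, weightedError α m x ≤ 2 ^ (α - 1) / α * (1 / m) ^ α := by
  have hh : (1 : ℝ) / m ≤ 1 / 2 := by gcongr; exact_mod_cast hm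
  calc ∫ x in Ico (1 - 1 / (m : ℝ)) 1, weightedError α m x
      ≤ ∫ x in Ico (1 - 1 / (m : ℝ)) 1, 2 ^ (α - 1) * (1 - x) ^ (α - 1) :=
        setIntegral_mono_on (integrableOn_weightedError_Ico hα hm)
          ((integrableOn_Ico_one_sub_rpow (by positivity) (by linarith [hα.1])).const_mul _)
          measurableSet_Ico
          fun x hx ↦ weightedError_le_of_ge hα (by omega) (by linarith [hx.1]) hx.2
    _ = 2 ^ (α - 1) / α * (1 / m) ^ α := by
        rw [integral_const_mul, integral_Ico_one_sub_rpow (by positivity) (by linarith [hα.1]),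
          sub_add_cancel]
        ring

end Integrals

/-- For `α ∈ (1,2)` there is a constant `c = c(α) > 0`, independent of
`m ≥ 2`, such that `0 ≤ ∫₀¹ x^{1-α} (φ₀(x) - (Π_h φ₀)(x)) dx ≤ c h^α` with `h = 1/m`. -/
theorem stmt19 (α : ℝ) (hα : α ∈ Ioo (1:ℝ) 2) :
    ∃ c > (0:ℝ), ∀ m : ℕ, 2 ≤ m →
      0 ≤ ∫ x in Ioo (0:ℝ) 1, x ^ (1 - α) * (phi0 α x - interp m (phi0 α) x) ∧
      ∫ x in Ioo (0:ℝ) 1, x ^ (1 - α) * (phi0 α x - interp m (phi0 α) x)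
        ≤ c * ((1:ℝ) / m) ^ α := by
  have hα' : α ∈ Icc 1 2 := Ioo_subset_Icc_self hα
  have h2α : 0 < 2 - α := by linarith [hα.2]
  have hα₀ : 0 < α := by linarith [hα.1]
  refine ⟨2 ^ (3 - α) * (2 ^ (3 - α) + 2 ^ (α - 1)) / (2 - α) + 2 ^ (α - 1) / α,
    by positivity, fun m hm ↦ ?_⟩
  change 0 ≤ ∫ x in Ioo (0:ℝ) 1, weightedError α m x ∧
    ∫ x in Ioo (0:ℝ) 1, weightedError α m x ≤ _
  have hh : (1 : ℝ) / m ≤ 1 / 2 := by gcongr; exact_mod_cast hm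
  refine ⟨setIntegral_nonneg measurableSet_Ioo fun x hx ↦ weightedError_nonneg hα' (by omega) hx,
    ?_⟩
  have hh₀ : (0 : ℝ) < 1 / m := by positivity
  rw [← Ioo_union_Ico_eq_Ioo (b := 1 - 1 / (m : ℝ)) (by linarith) (by linarith), setIntegral_union
    ((Iio_disjoint_Ici le_rfl).mono Ioo_subset_Iio_self Ico_subset_Ici_self) measurableSet_Ico
    (integrableOn_weightedError_Ioo hα (by omega)) (integrableOn_weightedError_Ico hα' hm), add_mul]
  exact add_le_add (setIntegral_weightedError_Ioo_le hα (by omega))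
    (setIntegral_weightedError_Ico_le hα' hm)
end
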